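/- arXiv:2505.16343 — 4 statements merged into one kernel-verified Lean document; each statement's English description precedes it below -/
import Mathlib

section
/- Let D ⊂ ℝ^d be a compact set with finite positive Lebesgue measure |D|, J = [0,T] with T > 0, k ∈ L²(D×D), f ∈ BC¹(ℝ), and g ∈ C⁰(J, L²(D)). Define κ_D = max(1, √|D|) and N(t,u) = −u + H(k)(f∘u) + g(t) for (t,u) ∈ J × L²(D). Then N is continuous from J × L²(D) to L²(D), for all t ∈ J and u, v ∈ L²(D) it satisfies the Lipschitz estimate ‖N(t,u) − N(t,v)‖₂ ≤ (1 + κ_D ‖k‖_{L²(D×D)} ‖f'‖_∞) ‖u − v‖₂, and the growth bound ‖N(t,u)‖₂ ≤ ‖u‖₂ + κ_D ‖k‖_{L²(D×D)} ‖f‖_∞ + sup_{s∈J}‖g(s)‖₂. -/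
/-!
The integral operator `H(k)` is bounded on `L²(D)` by the Hilbert–Schmidt norm `‖k‖`
(Cauchy–Schwarz on each slice `k(x, ·)`, then Fubini). The superposition operator `u ↦ f ∘ u`
is `‖f'‖_∞`-Lipschitz by the mean value theorem, and bounded by `√|D| ‖f‖_∞` because `D` has
finite measure. Continuity, the Lipschitz estimate and the growth bound then follow from the
triangle inequality, with `κ_D ≥ 1` and `κ_D ≥ √|D|` absorbing the constants.
-/

open MeasureTheory Set
open scoped ENNReal NNReal

namespace MeasureTheory

variable {α β : Type*} [MeasurableSpace α] [MeasurableSpace β] {μ : Measure α} {ν : Measure β}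

theorem L2.norm_sq_eq_integral_sq (u : Lp ℝ 2 μ) : ‖u‖ ^ 2 = ∫ x, u x ^ 2 ∂μ := by
  rw [← real_inner_self_eq_norm_sq, L2.inner_def]
  simp only [RCLike.inner_apply, conj_trivial, sq]

theorem MemLp.sq_integral_mul_le {φ : α → ℝ} (hφ : MemLp φ 2 μ) (w : Lp ℝ 2 μ) :
    (∫ x, φ x * w x ∂μ) ^ 2 ≤ (∫ x, φ x ^ 2 ∂μ) * ‖w‖ ^ 2 := by
  have hcoe : (hφ.toLp φ : α → ℝ) =ᵐ[μ] φ := hφ.coeFn_toLp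
  have h_inner : ∫ x, φ x * w x ∂μ = inner ℝ (hφ.toLp φ) w := by
    rw [L2.inner_def]
    refine integral_congr_ae ?_
    filter_upwards [hcoe] with x hx
    simp [hx, mul_comm]
  have h_norm : ∫ x, φ x ^ 2 ∂μ = ‖hφ.toLp φ‖ ^ 2 := by
    rw [L2.norm_sq_eq_integral_sq]
    refine integral_congr_ae ?_
    filter_upwards [hcoe] with x hx
    rw [hx]
  rw [h_inner, h_norm, ← mul_pow, ← sq_abs]
  gcongr
  exact abs_real_inner_le_norm _ _

theorem MemLp.ae_memLp_prodMk_left [SFinite μ] [SFinite ν] {K : α × β → ℝ}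
    (hK : MemLp K 2 (μ.prod ν)) :
    ∀ᵐ x ∂μ, MemLp (fun y => K (x, y)) 2 ν := by
  filter_upwards [hK.integrable_sq.prod_right_ae, hK.aestronglyMeasurable.prodMk_left]
    with x hx_int hx_meas
  exact (memLp_two_iff_integrable_sq hx_meas).2 hx_int

theorem L2.norm_le_of_ae_eq_integral_kernel [SFinite μ] [SFinite ν]
    (K : Lp ℝ 2 (μ.prod ν)) (w : Lp ℝ 2 ν) (v : Lp ℝ 2 μ)
    (hv : (v : α → ℝ) =ᵐ[μ] fun x => ∫ y, K (x, y) * w y ∂ν) :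
    ‖v‖ ≤ ‖K‖ * ‖w‖ := by
  have hK2 : Integrable (fun p => K p ^ 2) (μ.prod ν) := (Lp.memLp K).integrable_sq
  have h_pointwise : ∀ᵐ x ∂μ, v x ^ 2 ≤ (∫ y, K (x, y) ^ 2 ∂ν) * ‖w‖ ^ 2 := by
    filter_upwards [hv, (Lp.memLp K).ae_memLp_prodMk_left] with x hx hmem
    rw [hx]
    exact hmem.sq_integral_mul_le w
  have h_sq : ‖v‖ ^ 2 ≤ (‖K‖ * ‖w‖) ^ 2 :=
    calc ‖v‖ ^ 2 = ∫ x, v x ^ 2 ∂μ := L2.norm_sq_eq_integral_sq v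
      _ ≤ ∫ x, (∫ y, K (x, y) ^ 2 ∂ν) * ‖w‖ ^ 2 ∂μ :=
        integral_mono_ae (Lp.memLp v).integrable_sq
          (hK2.integral_prod_left.mul_const _) h_pointwise
      _ = (∫ p, K p ^ 2 ∂(μ.prod ν)) * ‖w‖ ^ 2 := by
        rw [integral_mul_const, integral_integral hK2]
      _ = (‖K‖ * ‖w‖) ^ 2 := by rw [mul_pow, L2.norm_sq_eq_integral_sq K]
  exact le_of_sq_le_sq h_sq (by positivity)

theorem Lp.lipschitzWith_of_ae_eq_comp {E E' : Type*} [NormedAddCommGroup E]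
    [NormedAddCommGroup E'] {p : ℝ≥0∞} [Fact (1 ≤ p)] {f : E → E'} {C : ℝ≥0}
    (hf : LipschitzWith C f) {F : Lp E p μ → Lp E' p μ}
    (hF : ∀ u : Lp E p μ, (F u : α → E') =ᵐ[μ] fun x => f (u x)) :
    LipschitzWith C F := by
  refine lipschitzWith_iff_norm_sub_le.2 fun u v => Lp.norm_le_mul_norm_of_ae_le_mul ?_
  filter_upwards [Lp.coeFn_sub (F u) (F v), Lp.coeFn_sub u v, hF u, hF v] with x hFuv huv hu hv
  rw [hFuv, huv, Pi.sub_apply, Pi.sub_apply, hu, hv]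
  exact hf.norm_sub_le _ _

theorem L2.norm_le_sqrt_measure_univ_mul [IsFiniteMeasure μ] {E : Type*} [NormedAddCommGroup E]
    {w : Lp E 2 μ} {M : ℝ} (hM : 0 ≤ M) (hw : ∀ᵐ x ∂μ, ‖w x‖ ≤ M) :
    ‖w‖ ≤ √(μ univ).toReal * M := by
  refine (Lp.norm_le_of_ae_bound hM hw).trans_eq ?_
  rw [Real.sqrt_eq_rpow, ENNReal.toReal_ofNat, one_div]
  rfl

end MeasureTheory

theorem lipschitzWith_ciSup_abs_deriv {f : ℝ → ℝ} (hf : Differentiable ℝ f)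
    (hbdd : BddAbove (range fun s => |deriv f s|)) :
    LipschitzWith (⨆ s, |deriv f s|).toNNReal f := by
  refine lipschitzWith_of_nnnorm_deriv_le hf fun s => ?_
  rw [← NNReal.coe_le_coe, coe_nnnorm, Real.norm_eq_abs]
  exact (le_ciSup hbdd s).trans (Real.le_coe_toNNReal _)

theorem norm_neg_add_add_sub_neg_add_add_le {E : Type*} [SeminormedAddCommGroup E] {G : E → E}
    {A : ℝ} (hG : ∀ u v, ‖G u - G v‖ ≤ A * ‖u - v‖) (c u v : E) :
    ‖(-u + G u + c) - (-v + G v + c)‖ ≤ (1 + A) * ‖u - v‖ := by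
  calc ‖(-u + G u + c) - (-v + G v + c)‖ = ‖-(u - v) + (G u - G v)‖ := by congr 1; abel
    _ ≤ ‖u - v‖ + A * ‖u - v‖ := by grw [norm_add_le, norm_neg, hG]
    _ = (1 + A) * ‖u - v‖ := by ring

theorem stmt6_general (d : ℕ) (D : Set (EuclideanSpace ℝ (Fin d)))
    (hfin : volume D < ⊤)
    (T : ℝ)
    (k : Lp ℝ 2 ((volume.restrict D).prod (volume.restrict D)))
    (Hk : Lp ℝ 2 (volume.restrict D) →L[ℝ] Lp ℝ 2 (volume.restrict D))
    (hHk : ∀ v : Lp ℝ 2 (volume.restrict D),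
      (Hk v : _ → ℝ) =ᵐ[volume.restrict D]
        fun x => ∫ x', k (x, x') * v x' ∂(volume.restrict D))
    (f : ℝ → ℝ) (hf : ContDiff ℝ 1 f)
    (hfb : ∃ C, ∀ s : ℝ, |f s| ≤ C) (hfb' : ∃ C, ∀ s : ℝ, |deriv f s| ≤ C)
    (F : Lp ℝ 2 (volume.restrict D) → Lp ℝ 2 (volume.restrict D))
    (hF : ∀ u : Lp ℝ 2 (volume.restrict D),
      (F u : _ → ℝ) =ᵐ[volume.restrict D] fun x => f (u x))
    (g : C(Set.Icc (0:ℝ) T, Lp ℝ 2 (volume.restrict D))) :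
    Continuous (fun p : Set.Icc (0:ℝ) T × Lp ℝ 2 (volume.restrict D) =>
      -p.2 + Hk (F p.2) + g p.1) ∧
    (∀ (t : Set.Icc (0:ℝ) T) (u v : Lp ℝ 2 (volume.restrict D)),
      ‖(-u + Hk (F u) + g t) - (-v + Hk (F v) + g t)‖ ≤
        (1 + max 1 (Real.sqrt (volume D).toReal) * ‖k‖ * (⨆ s : ℝ, |deriv f s|)) * ‖u - v‖) ∧
    (∀ (t : Set.Icc (0:ℝ) T) (u : Lp ℝ 2 (volume.restrict D)),
      ‖-u + Hk (F u) + g t‖ ≤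
        ‖u‖ + max 1 (Real.sqrt (volume D).toReal) * ‖k‖ * (⨆ s : ℝ, |f s|) + ‖g‖) := by
  have : IsFiniteMeasure (volume.restrict D) := isFiniteMeasure_restrict.2 hfin.ne
  obtain ⟨C', hC'⟩ := hfb'
  obtain ⟨C, hC⟩ := hfb
  set L := ⨆ s : ℝ, |deriv f s|
  set M := ⨆ s : ℝ, |f s|
  have hL : 0 ≤ L := (abs_nonneg _).trans (le_ciSup ⟨C', forall_mem_range.2 hC'⟩ 0)
  have hM : ∀ s, |f s| ≤ M := le_ciSup ⟨C, forall_mem_range.2 hC⟩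
  have hM0 : 0 ≤ M := (abs_nonneg _).trans (hM 0)
  have hF_lip : LipschitzWith L.toNNReal F := Lp.lipschitzWith_of_ae_eq_comp
    (lipschitzWith_ciSup_abs_deriv (hf.differentiable one_ne_zero)
      ⟨C', forall_mem_range.2 hC'⟩) hF
  have hHk_le : ∀ w, ‖Hk w‖ ≤ ‖k‖ * ‖w‖ := fun w =>
    L2.norm_le_of_ae_eq_integral_kernel k w (Hk w) (hHk w)
  have hF_le : ∀ u, ‖F u‖ ≤ √(volume D).toReal * M := fun u => by
    rw [← Measure.restrict_apply_univ D]
    refine L2.norm_le_sqrt_measure_univ_mul hM0 ?_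
    filter_upwards [hF u] with x hx
    exact hx ▸ hM _
  refine ⟨?_, fun t => norm_neg_add_add_sub_neg_add_add_le (fun u v => ?_) (g t), fun t u => ?_⟩
  · exact ((continuous_snd.neg.add (Hk.continuous.comp (hF_lip.continuous.comp continuous_snd))).add
      (g.continuous.comp continuous_fst))
  · calc ‖Hk (F u) - Hk (F v)‖ = ‖Hk (F u - F v)‖ := by rw [map_sub]
      _ ≤ ‖k‖ * (L * ‖u - v‖) := by
        grw [hHk_le, ← Real.coe_toNNReal L hL, hF_lip.norm_sub_le]
      _ ≤ max 1 √(volume D).toReal * ‖k‖ * L * ‖u - v‖ := by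
        nlinarith [le_max_left 1 √(volume D).toReal, norm_nonneg k,
          mul_nonneg (mul_nonneg (norm_nonneg k) hL) (norm_nonneg (u - v))]
  · calc ‖-u + Hk (F u) + g t‖ ≤ ‖-u‖ + ‖Hk (F u)‖ + ‖g t‖ := norm_add₃_le
      _ ≤ ‖u‖ + ‖k‖ * (√(volume D).toReal * M) + ‖g‖ := by
        grw [norm_neg, hHk_le, hF_le, g.norm_coe_le_norm t]
      _ ≤ ‖u‖ + max 1 √(volume D).toReal * ‖k‖ * M + ‖g‖ := by
        nlinarith [le_max_right 1 √(volume D).toReal,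
          mul_nonneg (norm_nonneg k) hM0]

/-- Properties of the neural-field vector field
`N(t,u) = −u + H(k)(f∘u) + g(t)` on `J × L²(D)`: continuity, the Lipschitz estimate with
constant `1 + κ_D ‖k‖ ‖f'‖_∞`, and the growth bound `‖N(t,u)‖ ≤ ‖u‖ + κ_D ‖k‖ ‖f‖_∞ + ‖g‖`. -/
theorem stmt6 (d : ℕ) (D : Set (EuclideanSpace ℝ (Fin d)))
    (hD : IsCompact D) (hpos : 0 < volume D) (hfin : volume D < ⊤)
    (T : ℝ) (hT : 0 < T)
    (k : Lp ℝ 2 ((volume.restrict D).prod (volume.restrict D)))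
    (Hk : Lp ℝ 2 (volume.restrict D) →L[ℝ] Lp ℝ 2 (volume.restrict D))
    (hHk : ∀ v : Lp ℝ 2 (volume.restrict D),
      (Hk v : _ → ℝ) =ᵐ[volume.restrict D]
        fun x => ∫ x', k (x, x') * v x' ∂(volume.restrict D))
    (f : ℝ → ℝ) (hf : ContDiff ℝ 1 f)
    (hfb : ∃ C, ∀ s : ℝ, |f s| ≤ C) (hfb' : ∃ C, ∀ s : ℝ, |deriv f s| ≤ C)
    (F : Lp ℝ 2 (volume.restrict D) → Lp ℝ 2 (volume.restrict D))
    (hF : ∀ u : Lp ℝ 2 (volume.restrict D),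
      (F u : _ → ℝ) =ᵐ[volume.restrict D] fun x => f (u x))
    (g : C(Set.Icc (0:ℝ) T, Lp ℝ 2 (volume.restrict D))) :
    Continuous (fun p : Set.Icc (0:ℝ) T × Lp ℝ 2 (volume.restrict D) =>
      -p.2 + Hk (F p.2) + g p.1) ∧
    (∀ (t : Set.Icc (0:ℝ) T) (u v : Lp ℝ 2 (volume.restrict D)),
      ‖(-u + Hk (F u) + g t) - (-v + Hk (F v) + g t)‖ ≤
        (1 + max 1 (Real.sqrt (volume D).toReal) * ‖k‖ * (⨆ s : ℝ, |deriv f s|)) * ‖u - v‖) ∧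
    (∀ (t : Set.Icc (0:ℝ) T) (u : Lp ℝ 2 (volume.restrict D)),
      ‖-u + Hk (F u) + g t‖ ≤
        ‖u‖ + max 1 (Real.sqrt (volume D).toReal) * ‖k‖ * (⨆ s : ℝ, |f s|) + ‖g‖) :=
  stmt6_general d D hfin T k Hk hHk f hf hfb hfb' F hF g
end

section
/- Let D ⊂ ℝ^d be a compact set with finite positive Lebesgue measure |D|, J = [0,T] with T > 0, k ∈ L²(D×D), f ∈ BC¹(ℝ), g ∈ C⁰(J, L²(D)), and v ∈ L²(D). Define the Volterra operator φ(u)(t) = v + ∫₀ᵗ [−u(s) + H(k)(f∘u(s)) + g(s)] ds for u ∈ C⁰(J, L²(D)), and set κ_N = 1 + κ_D ‖k‖_{L²(D×D)} ‖f'‖_∞ with κ_D = max(1, √|D|). Then φ maps C⁰(J, L²(D)) into C¹(J, L²(D)), and for all u, ū ∈ C⁰(J, L²(D)): ‖φ(u) − φ(ū)‖_{C⁰(J,L²(D))} ≤ T κ_N ‖u − ū‖_{C⁰(J,L²(D))} and ‖φ(u) − φ(ū)‖_{C¹(J,L²(D))} ≤ (1+T) κ_N ‖u − ū‖_{C⁰(J,L²(D))}.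 -/
/-!
The integrand `N u = -u + H(k)(f ∘ u)` is Lipschitz on `L²(D)` with constant
`1 + ‖k‖ ‖f'‖_∞ ≤ κ_N`: the superposition operator `u ↦ f ∘ u` inherits the Lipschitz constant
`‖f'‖_∞` of `f` by the mean value theorem, and Cauchy–Schwarz in the second variable gives the
Hilbert–Schmidt bound `‖H(k)‖ ≤ ‖k‖_{L²(D×D)}`. The fundamental theorem of calculus then makes
`φ(u)` continuously differentiable with derivative the integrand, and integrating the Lipschitz
bound of the integrand over `[0, t] ⊆ [0, T]` gives the `C⁰` estimate.
-/

open MeasureTheory Set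

section HilbertSchmidt

variable {α β : Type*} [MeasurableSpace α] [MeasurableSpace β] {μ : Measure α} {ν : Measure β}

theorem MeasureTheory.Lp.norm_sq_eq_integral_sq (f : Lp ℝ 2 μ) :
    ‖f‖ ^ 2 = ∫ x, f x ^ 2 ∂μ := by
  rw [← real_inner_self_eq_norm_sq, L2.inner_def]
  simp [sq]

theorem sq_integral_mul_le_integral_sq_mul_norm_sq {a : α → ℝ} (ha : MemLp a 2 μ)
    (w : Lp ℝ 2 μ) : (∫ y, a y * w y ∂μ) ^ 2 ≤ (∫ y, a y ^ 2 ∂μ) * ‖w‖ ^ 2 := by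
  have hA := ha.coeFn_toLp
  have h_inner : inner ℝ (ha.toLp a) w = ∫ y, a y * w y ∂μ := by
    rw [L2.inner_def]
    refine integral_congr_ae ?_
    filter_upwards [hA] with y hy
    simp [hy, mul_comm]
  have h_norm : ‖ha.toLp a‖ ^ 2 = ∫ y, a y ^ 2 ∂μ := by
    rw [Lp.norm_sq_eq_integral_sq]
    refine integral_congr_ae ?_
    filter_upwards [hA] with y hy
    rw [hy]
  rw [← h_inner, ← h_norm, ← mul_pow]
  exact sq_le_sq.mpr ((abs_real_inner_le_norm _ _).trans (le_abs_self _))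

theorem norm_le_norm_kernel_mul_norm [SFinite μ] [SFinite ν] (k : Lp ℝ 2 (μ.prod ν))
    (w : Lp ℝ 2 ν) (Hw : Lp ℝ 2 μ) (hHw : Hw =ᵐ[μ] fun x => ∫ y, k (x, y) * w y ∂ν) :
    ‖Hw‖ ≤ ‖k‖ * ‖w‖ := by
  have hk2 : Integrable (fun p => k p ^ 2) (μ.prod ν) := (Lp.memLp k).integrable_sq
  have h_slice : ∀ᵐ x ∂μ, MemLp (fun y => k (x, y)) 2 ν := by
    filter_upwards [hk2.prod_right_ae, (Lp.aestronglyMeasurable k).prodMk_left] with x h1 h2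
    exact (memLp_two_iff_integrable_sq h2).mpr h1
  have h_pointwise : ∀ᵐ x ∂μ, Hw x ^ 2 ≤ (∫ y, k (x, y) ^ 2 ∂ν) * ‖w‖ ^ 2 := by
    filter_upwards [hHw, h_slice] with x hx hkx
    rw [hx]
    exact sq_integral_mul_le_integral_sq_mul_norm_sq hkx w
  have h_sq : ‖Hw‖ ^ 2 ≤ (‖k‖ * ‖w‖) ^ 2 := calc
    ‖Hw‖ ^ 2 = ∫ x, Hw x ^ 2 ∂μ := Lp.norm_sq_eq_integral_sq Hw
    _ ≤ ∫ x, (∫ y, k (x, y) ^ 2 ∂ν) * ‖w‖ ^ 2 ∂μ :=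
      integral_mono_ae (Lp.memLp Hw).integrable_sq (hk2.integral_prod_left.mul_const _)
        h_pointwise
    _ = (‖k‖ * ‖w‖) ^ 2 := by
      rw [integral_mul_const, ← integral_prod _ hk2, ← Lp.norm_sq_eq_integral_sq, mul_pow]
  exact (pow_le_pow_iff_left₀ (norm_nonneg _) (by positivity) two_ne_zero).mp h_sq

theorem ContinuousLinearMap.opNorm_le_of_ae_eq_integral_kernel [SFinite μ] [SFinite ν]
    (k : Lp ℝ 2 (μ.prod ν)) (H : Lp ℝ 2 ν →L[ℝ] Lp ℝ 2 μ)
    (hH : ∀ w, H w =ᵐ[μ] fun x => ∫ y, k (x, y) * w y ∂ν) : ‖H‖ ≤ ‖k‖ :=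
  H.opNorm_le_bound (norm_nonneg k) fun w => norm_le_norm_kernel_mul_norm k w (H w) (hH w)

end HilbertSchmidt

theorem MeasureTheory.Lp.norm_sub_le_of_ae_eq_comp {α E F : Type*} [MeasurableSpace α]
    {μ : Measure α} [NormedAddCommGroup E] [NormedAddCommGroup F] {p : ENNReal} {f : E → F}
    {L : ℝ} (hf : ∀ a b, ‖f a - f b‖ ≤ L * ‖a - b‖) {u u' : Lp E p μ} {Fu Fu' : Lp F p μ}
    (hu : Fu =ᵐ[μ] fun x => f (u x)) (hu' : Fu' =ᵐ[μ] fun x => f (u' x)) :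
    ‖Fu - Fu'‖ ≤ L * ‖u - u'‖ := by
  refine Lp.norm_le_mul_norm_of_ae_le_mul ?_
  filter_upwards [hu, hu', Lp.coeFn_sub Fu Fu', Lp.coeFn_sub u u'] with x h h' hF hu
  rw [hF, Pi.sub_apply, h, h', hu, Pi.sub_apply]
  exact hf _ _

theorem norm_sub_le_iSup_abs_deriv_mul {f : ℝ → ℝ} (hf : Differentiable ℝ f)
    (hbdd : ∃ C, ∀ s, |deriv f s| ≤ C) (a b : ℝ) :
    ‖f a - f b‖ ≤ (⨆ s, |deriv f s|) * ‖a - b‖ := by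
  obtain ⟨C, hC⟩ := hbdd
  exact convex_univ.norm_image_sub_le_of_norm_deriv_le (fun x _ => hf x)
    (fun x _ => le_ciSup ⟨C, by rintro _ ⟨s, rfl⟩; exact hC s⟩ x) (mem_univ b) (mem_univ a)

theorem norm_neg_add_sub_neg_add_le {E : Type*} [SeminormedAddCommGroup E] {G : E → E} {K : ℝ}
    (hG : ∀ a b, ‖G a - G b‖ ≤ K * ‖a - b‖) (a b : E) :
    ‖(-a + G a) - (-b + G b)‖ ≤ (1 + K) * ‖a - b‖ := calc
  ‖(-a + G a) - (-b + G b)‖ = ‖(b - a) + (G a - G b)‖ := by congr 1; abel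
  _ ≤ ‖a - b‖ + K * ‖a - b‖ :=
    (norm_add_le _ _).trans (add_le_add (norm_sub_rev _ _).le (hG a b))
  _ = (1 + K) * ‖a - b‖ := by ring

theorem norm_neg_add_kernel_comp_sub_le {α : Type*} [MeasurableSpace α] {μ : Measure α}
    [SFinite μ] (k : Lp ℝ 2 (μ.prod μ)) {H : Lp ℝ 2 μ →L[ℝ] Lp ℝ 2 μ}
    (hH : ∀ w, H w =ᵐ[μ] fun x => ∫ y, k (x, y) * w y ∂μ) {f : ℝ → ℝ} {L : ℝ}
    (hf : ∀ a b, ‖f a - f b‖ ≤ L * ‖a - b‖) {F : Lp ℝ 2 μ → Lp ℝ 2 μ}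
    (hF : ∀ u, F u =ᵐ[μ] fun x => f (u x)) (a b : Lp ℝ 2 μ) :
    ‖(-a + H (F a)) - (-b + H (F b))‖ ≤ (1 + ‖k‖ * L) * ‖a - b‖ := by
  refine norm_neg_add_sub_neg_add_le (G := fun a => H (F a)) (fun a b => ?_) a b
  calc ‖H (F a) - H (F b)‖ = ‖H (F a - F b)‖ := by rw [map_sub]
    _ ≤ ‖k‖ * ‖F a - F b‖ := (H.le_opNorm _).trans (mul_le_mul_of_nonneg_right
      (H.opNorm_le_of_ae_eq_integral_kernel k hH) (norm_nonneg _))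
    _ ≤ ‖k‖ * (L * ‖a - b‖) := mul_le_mul_of_nonneg_left
      (Lp.norm_sub_le_of_ae_eq_comp hf (hF a) (hF b)) (norm_nonneg _)
    _ = ‖k‖ * L * ‖a - b‖ := by ring

section Volterra

variable {E : Type*} [NormedAddCommGroup E] {T : ℝ}

noncomputable def volterraField (hT : 0 ≤ T) (N : E → E) (g : C(Icc (0 : ℝ) T, E))
    (u : C(Icc (0 : ℝ) T, E)) (t : ℝ) : E :=
  N (u (projIcc 0 T hT t)) + g (projIcc 0 T hT t)

variable (hT : 0 ≤ T) {N : E → E} (g : C(Icc (0 : ℝ) T, E)) {κ : ℝ}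

theorem continuous_volterraField (hN : ∀ a b, ‖N a - N b‖ ≤ κ * ‖a - b‖)
    (u : C(Icc (0 : ℝ) T, E)) : Continuous (volterraField hT N g u) := by
  have hNc : Continuous N :=
    (LipschitzWith.of_dist_le' (by simpa only [dist_eq_norm] using hN)).continuous
  exact (hNc.comp (u.continuous.comp continuous_projIcc)).add
    (g.continuous.comp continuous_projIcc)

theorem norm_volterraField_sub_le (hκ : 0 ≤ κ) (hN : ∀ a b, ‖N a - N b‖ ≤ κ * ‖a - b‖)
    (u ubar : C(Icc (0 : ℝ) T, E)) (t : ℝ) :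
    ‖volterraField hT N g u t - volterraField hT N g ubar t‖ ≤ κ * ‖u - ubar‖ := by
  rw [volterraField, volterraField, add_sub_add_right_eq_sub]
  refine (hN _ _).trans (mul_le_mul_of_nonneg_left ?_ hκ)
  simpa only [dist_eq_norm] using ContinuousMap.dist_apply_le_dist (f := u) (g := ubar) _

end Volterra

theorem norm_intervalIntegral_sub_le {E : Type*} [NormedAddCommGroup E] [NormedSpace ℝ E]
    {a b : ℝ → E} {t M : ℝ} (ha : IntervalIntegrable a volume 0 t)
    (hb : IntervalIntegrable b volume 0 t) (hab : ∀ s, ‖a s - b s‖ ≤ M) (ht : 0 ≤ t) :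
    ‖(∫ s in (0 : ℝ)..t, a s) - ∫ s in (0 : ℝ)..t, b s‖ ≤ t * M := by
  rw [← intervalIntegral.integral_sub ha hb]
  simpa [abs_of_nonneg ht, mul_comm] using
    intervalIntegral.norm_integral_le_of_norm_le_const (a := 0) (b := t) fun s _ => hab s

theorem stmt8_general (d : ℕ) (D : Set (EuclideanSpace ℝ (Fin d)))
    (T : ℝ) (hT : 0 < T)
    (k : Lp ℝ 2 ((volume.restrict D).prod (volume.restrict D)))
    (Hk : Lp ℝ 2 (volume.restrict D) →L[ℝ] Lp ℝ 2 (volume.restrict D))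
    (hHk : ∀ v : Lp ℝ 2 (volume.restrict D),
      (Hk v : _ → ℝ) =ᵐ[volume.restrict D]
        fun x => ∫ x', k (x, x') * v x' ∂(volume.restrict D))
    (f : ℝ → ℝ) (hf : ContDiff ℝ 1 f)
    (hfb' : ∃ C, ∀ s : ℝ, |deriv f s| ≤ C)
    (F : Lp ℝ 2 (volume.restrict D) → Lp ℝ 2 (volume.restrict D))
    (hF : ∀ u : Lp ℝ 2 (volume.restrict D),
      (F u : _ → ℝ) =ᵐ[volume.restrict D] fun x => f (u x))
    (g : C(Set.Icc (0:ℝ) T, Lp ℝ 2 (volume.restrict D)))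
    (v : Lp ℝ 2 (volume.restrict D))
    -- the Volterra operator `φ`, written with values extended to `ℝ` via `projIcc`
    (Φ : C(Set.Icc (0:ℝ) T, Lp ℝ 2 (volume.restrict D)) → ℝ → Lp ℝ 2 (volume.restrict D))
    (hΦ : ∀ u t, Φ u t = v + ∫ s in (0:ℝ)..t,
      (-(u (Set.projIcc 0 T hT.le s)) + Hk (F (u (Set.projIcc 0 T hT.le s))) +
        g (Set.projIcc 0 T hT.le s))) :
    -- φ maps C⁰(J, L²(D)) into C¹(J, L²(D)):
    (∀ u, ∀ t ∈ Set.Icc (0:ℝ) T,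
      HasDerivWithinAt (Φ u)
        (-(u (Set.projIcc 0 T hT.le t)) + Hk (F (u (Set.projIcc 0 T hT.le t))) +
          g (Set.projIcc 0 T hT.le t))
        (Set.Icc (0:ℝ) T) t) ∧
    (∀ u : C(Set.Icc (0:ℝ) T, Lp ℝ 2 (volume.restrict D)), ContinuousOn (fun t : ℝ =>
      -(u (Set.projIcc 0 T hT.le t)) + Hk (F (u (Set.projIcc 0 T hT.le t))) +
        g (Set.projIcc 0 T hT.le t)) (Set.Icc (0:ℝ) T)) ∧
    -- C⁰ Lipschitz estimate:
    (∀ u ubar, ∀ t ∈ Set.Icc (0:ℝ) T,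
      ‖Φ u t - Φ ubar t‖ ≤
        T * (1 + max 1 (Real.sqrt (volume D).toReal) * ‖k‖ * (⨆ s : ℝ, |deriv f s|)) *
          ‖u - ubar‖) ∧
    -- C¹ Lipschitz estimate (sup of values plus sup of derivatives):
    (∀ u ubar, ∀ s ∈ Set.Icc (0:ℝ) T, ∀ t ∈ Set.Icc (0:ℝ) T,
      ‖Φ u s - Φ ubar s‖ +
        ‖(-(u (Set.projIcc 0 T hT.le t)) + Hk (F (u (Set.projIcc 0 T hT.le t))) +
            g (Set.projIcc 0 T hT.le t)) -
          (-(ubar (Set.projIcc 0 T hT.le t)) + Hk (F (ubar (Set.projIcc 0 T hT.le t))) +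
            g (Set.projIcc 0 T hT.le t))‖ ≤
        (1 + T) * (1 + max 1 (Real.sqrt (volume D).toReal) * ‖k‖ * (⨆ s : ℝ, |deriv f s|)) *
          ‖u - ubar‖) := by
  set L := ⨆ s : ℝ, |deriv f s|
  have hL : 0 ≤ L := Real.iSup_nonneg fun _ => abs_nonneg _
  -- with this `N`, `volterraField hT.le N g u` is definitionally the integrand in `hΦ`
  let N := fun a : Lp ℝ 2 (volume.restrict D) => -a + Hk (F a)
  have hN (a b) : ‖N a - N b‖ ≤
      (1 + max 1 (Real.sqrt (volume D).toReal) * ‖k‖ * L) * ‖a - b‖ := by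
    refine (norm_neg_add_kernel_comp_sub_le k hHk
      (norm_sub_le_iSup_abs_deriv_mul (hf.differentiable one_ne_zero) hfb') hF a b).trans ?_
    gcongr
    exact le_mul_of_one_le_left (norm_nonneg k) (le_max_left _ _)
  set κ := 1 + max 1 (Real.sqrt (volume D).toReal) * ‖k‖ * L
  have hκ : 0 ≤ κ := add_nonneg zero_le_one (mul_nonneg (by positivity) hL)
  have hcont := continuous_volterraField hT.le g hN
  have hC0 (u ubar) (t) (ht : t ∈ Icc 0 T) : ‖Φ u t - Φ ubar t‖ ≤ T * κ * ‖u - ubar‖ := by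
    rw [hΦ, hΦ, add_sub_add_left_eq_sub]
    calc _ ≤ t * (κ * ‖u - ubar‖) := norm_intervalIntegral_sub_le
          ((hcont u).intervalIntegrable _ _) ((hcont ubar).intervalIntegrable _ _)
          (norm_volterraField_sub_le hT.le g hκ hN u ubar) ht.1
      _ ≤ T * κ * ‖u - ubar‖ := by rw [← mul_assoc]; gcongr; exact ht.2
  refine ⟨fun u t _ => ?_, fun u => (hcont u).continuousOn, hC0, fun u ubar s hs t _ => ?_⟩
  · rw [funext (hΦ u)]
    exact (((hcont u).integral_hasStrictDerivAt 0 t).hasDerivAt.const_add v).hasDerivWithinAt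
  · calc _ ≤ T * κ * ‖u - ubar‖ + κ * ‖u - ubar‖ :=
          add_le_add (hC0 u ubar s hs) (norm_volterraField_sub_le hT.le g hκ hN u ubar t)
      _ = (1 + T) * κ * ‖u - ubar‖ := by ring

/-- The Volterra operator
`φ(u)(t) = v + ∫₀ᵗ [−u(s) + H(k)(f∘u(s)) + g(s)] ds` maps `C⁰(J, L²(D))` into
`C¹(J, L²(D))` and satisfies the Lipschitz estimates
`‖φ(u)−φ(ū)‖_{C⁰} ≤ T κ_N ‖u−ū‖_{C⁰}` and `‖φ(u)−φ(ū)‖_{C¹} ≤ (1+T) κ_N ‖u−ū‖_{C⁰}`,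
with `κ_N = 1 + κ_D ‖k‖ ‖f'‖_∞`. -/
theorem stmt8 (d : ℕ) (D : Set (EuclideanSpace ℝ (Fin d)))
    (hD : IsCompact D) (hpos : 0 < volume D) (hfin : volume D < ⊤)
    (T : ℝ) (hT : 0 < T)
    (k : Lp ℝ 2 ((volume.restrict D).prod (volume.restrict D)))
    (Hk : Lp ℝ 2 (volume.restrict D) →L[ℝ] Lp ℝ 2 (volume.restrict D))
    (hHk : ∀ v : Lp ℝ 2 (volume.restrict D),
      (Hk v : _ → ℝ) =ᵐ[volume.restrict D]
        fun x => ∫ x', k (x, x') * v x' ∂(volume.restrict D))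
    (f : ℝ → ℝ) (hf : ContDiff ℝ 1 f)
    (hfb : ∃ C, ∀ s : ℝ, |f s| ≤ C) (hfb' : ∃ C, ∀ s : ℝ, |deriv f s| ≤ C)
    (F : Lp ℝ 2 (volume.restrict D) → Lp ℝ 2 (volume.restrict D))
    (hF : ∀ u : Lp ℝ 2 (volume.restrict D),
      (F u : _ → ℝ) =ᵐ[volume.restrict D] fun x => f (u x))
    (g : C(Set.Icc (0:ℝ) T, Lp ℝ 2 (volume.restrict D)))
    (v : Lp ℝ 2 (volume.restrict D))
    -- the Volterra operator `φ`, written with values extended to `ℝ` via `projIcc`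
    (Φ : C(Set.Icc (0:ℝ) T, Lp ℝ 2 (volume.restrict D)) → ℝ → Lp ℝ 2 (volume.restrict D))
    (hΦ : ∀ u t, Φ u t = v + ∫ s in (0:ℝ)..t,
      (-(u (Set.projIcc 0 T hT.le s)) + Hk (F (u (Set.projIcc 0 T hT.le s))) +
        g (Set.projIcc 0 T hT.le s))) :
    -- φ maps C⁰(J, L²(D)) into C¹(J, L²(D)):
    (∀ u, ∀ t ∈ Set.Icc (0:ℝ) T,
      HasDerivWithinAt (Φ u)
        (-(u (Set.projIcc 0 T hT.le t)) + Hk (F (u (Set.projIcc 0 T hT.le t))) +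
          g (Set.projIcc 0 T hT.le t))
        (Set.Icc (0:ℝ) T) t) ∧
    (∀ u : C(Set.Icc (0:ℝ) T, Lp ℝ 2 (volume.restrict D)), ContinuousOn (fun t : ℝ =>
      -(u (Set.projIcc 0 T hT.le t)) + Hk (F (u (Set.projIcc 0 T hT.le t))) +
        g (Set.projIcc 0 T hT.le t)) (Set.Icc (0:ℝ) T)) ∧
    -- C⁰ Lipschitz estimate:
    (∀ u ubar, ∀ t ∈ Set.Icc (0:ℝ) T,
      ‖Φ u t - Φ ubar t‖ ≤
        T * (1 + max 1 (Real.sqrt (volume D).toReal) * ‖k‖ * (⨆ s : ℝ, |deriv f s|)) *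
          ‖u - ubar‖) ∧
    -- C¹ Lipschitz estimate (sup of values plus sup of derivatives):
    (∀ u ubar, ∀ s ∈ Set.Icc (0:ℝ) T, ∀ t ∈ Set.Icc (0:ℝ) T,
      ‖Φ u s - Φ ubar s‖ +
        ‖(-(u (Set.projIcc 0 T hT.le t)) + Hk (F (u (Set.projIcc 0 T hT.le t))) +
            g (Set.projIcc 0 T hT.le t)) -
          (-(ubar (Set.projIcc 0 T hT.le t)) + Hk (F (ubar (Set.projIcc 0 T hT.le t))) +
            g (Set.projIcc 0 T hT.le t))‖ ≤
        (1 + T) * (1 + max 1 (Real.sqrt (volume D).toReal) * ‖k‖ * (⨆ s : ℝ, |deriv f s|)) *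
          ‖u - ubar‖) :=
  stmt8_general d D T hT k Hk hHk f hf hfb' F hF g v Φ hΦ
end

section
/- Let D ⊂ ℝ^d be a compact set with finite positive Lebesgue measure |D|, J = [0,T] with T > 0, k ∈ L²(D×D), f ∈ BC¹(ℝ), g ∈ C⁰(J, L²(D)), and v ∈ L²(D). Then there exists a unique u ∈ C¹(J, L²(D)) with u(0) = v and u'(t) = −u(t) + H(k)(f∘u(t)) + g(t) for all t ∈ J. Moreover, with κ_D = max(1, √|D|), κ = ‖g‖_{C⁰(J,L²(D))} + κ_D ‖k‖_{L²(D×D)} ‖f‖_∞, and M₀ = 2 max(‖v‖₂, κ), one has the time-uniform bounds ‖u(t)‖₂ ≤ M₀ for all t ∈ J and ‖u‖_{C¹(J,L²(D))} ≤ 2 M₀ + κ. -/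
/-!
The right-hand side `G(t, u) = -u + H(k)(f ∘ u) + g(t)` is Lipschitz in `u` on all of `L²(D)`,
with some constant `L`, because the Nemytskii operator of `f` inherits the Lipschitz constant
`sup |f'|` of `f`. Hence the `n`-th iterate of the Picard operator `u ↦ v + ∫₀ᵗ G(s, u s) ds` on
`C([0,T], L²(D))` is Lipschitz with constant `(LT)ⁿ/n!`, so it is a contraction for large `n`, and
its fixed point is the solution; Gronwall's inequality gives uniqueness. For the bounds, `eᵗ u(t)`
has derivative `eᵗ (H(k)(f ∘ u) + g(t))`, of norm at most `eᵗ κ` by the Hilbert–Schmidt estimate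
`‖H(k) w‖ ≤ ‖k‖ ‖w‖` and `‖f ∘ u‖₂ ≤ √|D| ‖f‖_∞`; integrating,
`‖u(t)‖ ≤ e⁻ᵗ ‖v‖ + (1 - e⁻ᵗ) κ ≤ max(‖v‖, κ)`.
-/

open MeasureTheory Set Function
open scoped ENNReal NNReal Nat

section InitialValueProblem

variable {E : Type*} [NormedAddCommGroup E] [NormedSpace ℝ E] {G : ℝ → E → E} {T : ℝ} {K : ℝ≥0}

def IsSolutionOnIcc (hT : 0 ≤ T) (G : ℝ → E → E) (v : E) (u : C(Icc 0 T, E)) : Prop :=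
  IccExtend hT u 0 = v ∧
    ∀ t ∈ Icc 0 T, HasDerivWithinAt (IccExtend hT u) (G t (IccExtend hT u t)) (Icc 0 T) t

theorem continuous_picard (hG : Continuous (uncurry G)) {α : ℝ → E} (hα : Continuous α)
    (t₀ : ℝ) (v : E) : Continuous (ODE.picard G t₀ v α) :=
  continuous_const.add <| intervalIntegral.continuous_primitive
    (fun _ _ ↦ (hG.comp (continuous_id.prodMk hα)).intervalIntegrable _ _) t₀

section PicardMap

variable (hT : 0 ≤ T) (hG : Continuous (uncurry G)) (v : E)

noncomputable def picardMap (u : C(Icc 0 T, E)) : C(Icc 0 T, E) :=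
  ContinuousMap.restrict (Icc 0 T)
    ⟨ODE.picard G 0 v (IccExtend hT u), continuous_picard hG u.continuous.Icc_extend' 0 v⟩

theorem picardMap_apply (u : C(Icc 0 T, E)) (t : Icc 0 T) :
    picardMap hT hG v u t = v + ∫ s in (0 : ℝ)..t, G s (IccExtend hT u s) := rfl

variable {hT hG v}

theorem dist_iterate_picardMap_apply_le (hK : ∀ t, LipschitzWith K (G t)) (n : ℕ)
    (u w : C(Icc 0 T, E)) (t : Icc 0 T) :
    dist ((picardMap hT hG v)^[n] u t) ((picardMap hT hG v)^[n] w t) ≤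
      (K * t) ^ n / n ! * dist u w := by
  induction n generalizing t with
  | zero => simpa using ContinuousMap.dist_apply_le_dist t
  | succ n ih =>
    set a := (picardMap hT hG v)^[n] u
    set b := (picardMap hT hG v)^[n] w
    have hint (c : C(Icc 0 T, E)) :
        IntervalIntegrable (fun s ↦ G s (IccExtend hT c s)) volume 0 t :=
      (hG.comp (continuous_id.prodMk c.continuous.Icc_extend')).intervalIntegrable _ _
    have hstep : ∀ s ∈ Ioc 0 (t : ℝ), ‖G s (IccExtend hT a s) - G s (IccExtend hT b s)‖ ≤
        K * ((K * s) ^ n / n ! * dist u w) := fun s hs ↦ by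
      have hs' : s ∈ Icc 0 T := ⟨hs.1.le, hs.2.trans t.2.2⟩
      rw [← dist_eq_norm, IccExtend_of_mem hT a hs', IccExtend_of_mem hT b hs']
      exact (hK s).dist_le_mul _ _ |>.trans (by gcongr; exact ih ⟨s, hs'⟩)
    rw [iterate_succ_apply', iterate_succ_apply', dist_eq_norm, picardMap_apply, picardMap_apply,
      add_sub_add_left_eq_sub, ← intervalIntegral.integral_sub (hint a) (hint b)]
    calc _ ≤ ∫ s in (0 : ℝ)..t, K * ((K * s) ^ n / n ! * dist u w) :=
          intervalIntegral.norm_integral_le_of_norm_le t.2.1 (.of_forall hstep)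
            (by apply Continuous.intervalIntegrable; fun_prop)
      _ = (K * t) ^ (n + 1) / (n + 1)! * dist u w := by
          simp only [mul_pow, mul_div_assoc, ← mul_assoc]
          rw [intervalIntegral.integral_mul_const, intervalIntegral.integral_const_mul,
            intervalIntegral.integral_div, integral_pow, Nat.factorial_succ]
          push_cast
          field_simp
          ring

theorem exists_contractingWith_iterate_picardMap (hK : ∀ t, LipschitzWith K (G t)) :
    ∃ (n : ℕ) (C : ℝ≥0), ContractingWith C (picardMap hT hG v)^[n] := by
  have hlim := FloorSemiring.tendsto_pow_div_factorial_atTop ((K : ℝ) * T)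
  obtain ⟨n, hn⟩ := (hlim.eventually_lt_const one_pos).exists
  refine ⟨n, ⟨_, div_nonneg (pow_nonneg (mul_nonneg K.2 hT) n) n !.cast_nonneg⟩, hn,
    LipschitzWith.of_dist_le_mul fun u w ↦ ?_⟩
  refine (ContinuousMap.dist_le (mul_nonneg (NNReal.coe_nonneg _) dist_nonneg)).2 fun t ↦ ?_
  calc _ ≤ ((K : ℝ) * t) ^ n / n ! * dist u w := dist_iterate_picardMap_apply_le hK n u w t
    _ ≤ ((K : ℝ) * T) ^ n / n ! * dist u w := by
      have := mul_nonneg K.2 t.2.1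
      gcongr
      exact t.2.2

end PicardMap

theorem exists_isSolutionOnIcc [CompleteSpace E] (hT : 0 ≤ T) (hG : Continuous (uncurry G))
    (hK : ∀ t, LipschitzWith K (G t)) (v : E) : ∃ u, IsSolutionOnIcc hT G v u := by
  obtain ⟨n, C, hC⟩ := exists_contractingWith_iterate_picardMap (hT := hT) (hG := hG) (v := v) hK
  have : Nonempty C(Icc 0 T, E) := ⟨0⟩
  set u := ContractingWith.fixedPoint _ hC
  have hu : IsFixedPt (picardMap hT hG v) u := hC.isFixedPt_fixedPoint_iterate
  have heq : EqOn (IccExtend hT u) (ODE.picard G 0 v (IccExtend hT u)) (Icc 0 T) := fun t ht ↦ by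
    rw [IccExtend_of_mem hT u ht]
    exact (congrArg (· ⟨t, ht⟩) hu).symm
  refine ⟨u, ?_, fun t ht ↦ ?_⟩
  · rw [heq (left_mem_Icc.2 hT)]
    exact ODE.picard_apply₀
  · exact (ODE.hasDerivWithinAt_picard_Icc (left_mem_Icc.2 hT) (u := univ) hG.continuousOn
      u.continuous.Icc_extend'.continuousOn (fun _ _ ↦ mem_univ _) v ht).congr heq (heq ht)

variable {hT : 0 ≤ T} {v : E}

theorem IsSolutionOnIcc.hasDerivWithinAt_Ici {u : C(Icc 0 T, E)} (hu : IsSolutionOnIcc hT G v u)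
    {t : ℝ} (ht : t ∈ Ico 0 T) :
    HasDerivWithinAt (IccExtend hT u) (G t (IccExtend hT u t)) (Ici t) t :=
  (hu.2 t (Ico_subset_Icc_self ht)).mono_of_mem_nhdsWithin (Icc_mem_nhdsGE_of_mem ht)

theorem IsSolutionOnIcc.unique (hK : ∀ t, LipschitzWith K (G t)) {u w : C(Icc 0 T, E)}
    (hu : IsSolutionOnIcc hT G v u) (hw : IsSolutionOnIcc hT G v w) : u = w := by
  have := ODE_solution_unique_of_mem_Icc_right (s := fun _ ↦ univ)
    (fun t _ ↦ (hK t).lipschitzOnWith) u.continuous.Icc_extend'.continuousOn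
    (fun t ht ↦ hu.hasDerivWithinAt_Ici ht) (fun _ _ ↦ mem_univ _)
    w.continuous.Icc_extend'.continuousOn (fun t ht ↦ hw.hasDerivWithinAt_Ici ht)
    (fun _ _ ↦ mem_univ _) (hu.1.trans hw.1.symm)
  ext t
  simpa using this t.2

open Real in
theorem norm_le_max_of_hasDerivWithinAt_neg_add {u w : ℝ → E} {κ : ℝ}
    (hu : ContinuousOn u (Icc 0 T))
    (hu' : ∀ t ∈ Ico 0 T, HasDerivWithinAt u (-u t + w t) (Ici t) t)
    (hw : ∀ t ∈ Ico 0 T, ‖w t‖ ≤ κ) {t : ℝ} (ht : t ∈ Icc 0 T) :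
    ‖u t‖ ≤ max ‖u 0‖ κ := by
  have hexp : ‖exp t • u t‖ ≤ ‖u 0‖ + κ * (exp t - 1) := by
    refine image_norm_le_of_norm_deriv_right_le_deriv_boundary (f := fun s ↦ exp s • u s)
      (f' := fun s ↦ exp s • w s) (B' := fun s ↦ κ * exp s)
      (continuous_exp.continuousOn.smul hu) (fun s hs ↦ ?_) (by simp)
      (fun s ↦ ((hasDerivAt_exp s).sub_const 1 |>.const_mul κ).const_add _) (fun s hs ↦ ?_) ht
    · refine ((hasDerivAt_exp s).hasDerivWithinAt.smul (hu' s hs)).congr_deriv ?_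
      rw [smul_add, smul_neg]
      abel
    · rw [norm_smul, Real.norm_of_nonneg (exp_pos s).le, mul_comm]
      exact mul_le_mul_of_nonneg_right (hw s hs) (exp_pos s).le
  rw [norm_smul, Real.norm_of_nonneg (exp_pos t).le] at hexp
  have hexp_ge : 1 ≤ exp t := one_le_exp ht.1
  refine le_of_mul_le_mul_left (a := exp t) ?_ (exp_pos t)
  nlinarith [le_max_left ‖u 0‖ κ, le_max_right ‖u 0‖ κ]

theorem IsSolutionOnIcc.norm_le_max {A : ℝ → E → E} {κ : ℝ} (hGA : ∀ t x, G t x = -x + A t x)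
    (hA : ∀ t x, ‖A t x‖ ≤ κ) {u : C(Icc 0 T, E)} (hu : IsSolutionOnIcc hT G v u)
    (t : Icc 0 T) : ‖u t‖ ≤ max ‖v‖ κ := by
  have := norm_le_max_of_hasDerivWithinAt_neg_add (w := fun s ↦ A s (IccExtend hT u s))
    u.continuous.Icc_extend'.continuousOn
    (fun s hs ↦ (hu.hasDerivWithinAt_Ici hs).congr_deriv (hGA _ _)) (fun _ _ ↦ hA _ _) t.2
  rwa [IccExtend_val, hu.1] at this

end InitialValueProblem

theorem lipschitzWith_of_abs_deriv_le {f : ℝ → ℝ} (hf : Differentiable ℝ f) {C : ℝ}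
    (hC : ∀ s, |deriv f s| ≤ C) : LipschitzWith C.toNNReal f :=
  lipschitzWith_of_nnnorm_deriv_le hf fun s ↦ by
    rw [← NNReal.coe_le_coe, coe_nnnorm, Real.coe_toNNReal', Real.norm_eq_abs]
    exact (hC s).trans (le_max_left _ _)

namespace MeasureTheory

theorem eLpNorm_two_rpow_two {α ε : Type*} [MeasurableSpace α] [ENorm ε] {μ : Measure α}
    (f : α → ε) : eLpNorm f 2 μ ^ (2 : ℝ) = ∫⁻ x, ‖f x‖ₑ ^ (2 : ℝ) ∂μ := by
  simpa using eLpNorm_nnreal_pow_eq_lintegral (μ := μ) (f := f) (p := 2) two_ne_zero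

namespace Lp

variable {α : Type*} [MeasurableSpace α] {μ : Measure α}

theorem lipschitzWith_of_ae_eq_comp_s11 {E F : Type*} {p : ℝ≥0∞} [Fact (1 ≤ p)]
    [NormedAddCommGroup E] [NormedAddCommGroup F] {f : E → F} {K : ℝ≥0} (hf : LipschitzWith K f)
    {N : Lp E p μ → Lp F p μ} (hN : ∀ u, N u =ᵐ[μ] fun x ↦ f (u x)) : LipschitzWith K N :=
  LipschitzWith.of_dist_le_mul fun u w ↦ by
    rw [_root_.dist_eq_norm, _root_.dist_eq_norm]
    refine norm_le_mul_norm_of_ae_le_mul ?_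
    filter_upwards [coeFn_sub (N u) (N w), coeFn_sub u w, hN u, hN w] with x h1 h2 h3 h4
    rw [h1, h2, Pi.sub_apply, Pi.sub_apply, h3, h4, ← _root_.dist_eq_norm, ← _root_.dist_eq_norm]
    exact hf.dist_le_mul _ _

theorem norm_le_sqrt_measure_univ_mul_of_ae_bound {E : Type*} [NormedAddCommGroup E]
    [IsFiniteMeasure μ] {u : Lp E 2 μ} {C : ℝ} (hC : 0 ≤ C) (h : ∀ᵐ x ∂μ, ‖u x‖ ≤ C) :
    ‖u‖ ≤ √(μ univ).toReal * C := by
  refine (norm_le_of_ae_bound hC h).trans_eq ?_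
  simp [measureUnivNNReal, Real.sqrt_eq_rpow, ENNReal.coe_toNNReal_eq_toReal]

theorem norm_le_mul_norm_of_ae_eq_integral_kernel {β : Type*} [MeasurableSpace β]
    {ν : Measure β} [SFinite ν] (k : Lp ℝ 2 (μ.prod ν)) (w : Lp ℝ 2 ν) (Hw : Lp ℝ 2 μ)
    (h : Hw =ᵐ[μ] fun x ↦ ∫ y, k (x, y) * w y ∂ν) : ‖Hw‖ ≤ ‖k‖ * ‖w‖ := by
  have hk := Lp.aestronglyMeasurable k
  have hpt : ∀ᵐ x ∂μ, ‖Hw x‖ₑ ≤ eLpNorm (fun y ↦ k (x, y)) 2 ν * eLpNorm w 2 ν := by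
    filter_upwards [h, hk.prodMk_left] with x hx hkx
    calc ‖Hw x‖ₑ ≤ eLpNorm (fun y ↦ k (x, y) * w y) 1 ν := by
          rw [hx, eLpNorm_one_eq_lintegral_enorm]; exact enorm_integral_le_lintegral_enorm _
      _ ≤ _ := by
          simpa using eLpNorm_le_eLpNorm_mul_eLpNorm'_of_norm (p := 2) (q := 2) hkx
            (Lp.aestronglyMeasurable w) (· * ·) 1
            (.of_forall fun _ ↦ by simp [norm_mul])
  have hsq : eLpNorm Hw 2 μ ^ (2 : ℝ) ≤ (eLpNorm k 2 (μ.prod ν) * eLpNorm w 2 ν) ^ (2 : ℝ) := by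
    have hkm : AEMeasurable (fun z ↦ ‖k z‖ₑ ^ (2 : ℝ)) (μ.prod ν) := hk.enorm.pow_const _
    rw [ENNReal.mul_rpow_of_nonneg _ _ zero_le_two, eLpNorm_two_rpow_two, eLpNorm_two_rpow_two,
      lintegral_prod _ hkm, ← lintegral_mul_const'' _ hkm.lintegral_prod_right']
    refine lintegral_mono_ae (hpt.mono fun x hx ↦ ?_)
    rw [← eLpNorm_two_rpow_two, ← ENNReal.mul_rpow_of_nonneg _ _ zero_le_two]
    gcongr
  rw [norm_def, norm_def, norm_def, ← ENNReal.toReal_mul]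
  exact ENNReal.toReal_mono (by finiteness) ((ENNReal.rpow_le_rpow_iff two_pos).1 hsq)

theorem norm_le_of_ae_eq_integral_kernel_comp [IsFiniteMeasure μ] (k : Lp ℝ 2 (μ.prod μ))
    {H : Lp ℝ 2 μ → Lp ℝ 2 μ} (hH : ∀ w, H w =ᵐ[μ] fun x ↦ ∫ y, k (x, y) * w y ∂μ)
    {f : ℝ → ℝ} {S : ℝ} (hf : ∀ s, |f s| ≤ S) {N : Lp ℝ 2 μ → Lp ℝ 2 μ}
    (hN : ∀ u, N u =ᵐ[μ] fun x ↦ f (u x))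
    (u : Lp ℝ 2 μ) : ‖H (N u)‖ ≤ √(μ univ).toReal * ‖k‖ * S := by
  have hNu : ‖N u‖ ≤ √(μ univ).toReal * S :=
    norm_le_sqrt_measure_univ_mul_of_ae_bound ((abs_nonneg _).trans (hf 0))
      ((hN u).mono fun x hx ↦ hx ▸ hf _)
  calc ‖H (N u)‖ ≤ ‖k‖ * ‖N u‖ := norm_le_mul_norm_of_ae_eq_integral_kernel k _ _ (hH _)
    _ ≤ √(μ univ).toReal * ‖k‖ * S := by
      rw [mul_assoc, mul_left_comm]
      gcongr

end Lp

end MeasureTheory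

theorem stmt11_general (d : ℕ) (D : Set (EuclideanSpace ℝ (Fin d)))
    (hfin : volume D < ⊤)
    (T : ℝ) (hT : 0 < T)
    (k : Lp ℝ 2 ((volume.restrict D).prod (volume.restrict D)))
    (Hk : Lp ℝ 2 (volume.restrict D) →L[ℝ] Lp ℝ 2 (volume.restrict D))
    (hHk : ∀ v : Lp ℝ 2 (volume.restrict D),
      (Hk v : _ → ℝ) =ᵐ[volume.restrict D]
        fun x => ∫ x', k (x, x') * v x' ∂(volume.restrict D))
    (f : ℝ → ℝ) (hf : ContDiff ℝ 1 f)
    (hfb : ∃ C, ∀ s : ℝ, |f s| ≤ C) (hfb' : ∃ C, ∀ s : ℝ, |deriv f s| ≤ C)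
    (F : Lp ℝ 2 (volume.restrict D) → Lp ℝ 2 (volume.restrict D))
    (hF : ∀ u : Lp ℝ 2 (volume.restrict D),
      (F u : _ → ℝ) =ᵐ[volume.restrict D] fun x => f (u x))
    (g : C(Set.Icc (0:ℝ) T, Lp ℝ 2 (volume.restrict D)))
    (v : Lp ℝ 2 (volume.restrict D)) :
    ∃ u : C(Set.Icc (0:ℝ) T, Lp ℝ 2 (volume.restrict D)),
      (u (Set.projIcc 0 T hT.le 0) = v ∧
        ∀ t ∈ Set.Icc (0:ℝ) T,
          HasDerivWithinAt (fun s : ℝ => u (Set.projIcc 0 T hT.le s))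
            (-(u (Set.projIcc 0 T hT.le t)) + Hk (F (u (Set.projIcc 0 T hT.le t))) +
              g (Set.projIcc 0 T hT.le t))
            (Set.Icc (0:ℝ) T) t) ∧
      (∀ t : Set.Icc (0:ℝ) T,
        ‖u t‖ ≤ 2 * max ‖v‖ (‖g‖ + max 1 (Real.sqrt (volume D).toReal) * ‖k‖ * (⨆ s : ℝ, |f s|))) ∧
      (∀ s t : Set.Icc (0:ℝ) T,
        ‖u s‖ + ‖-(u t) + Hk (F (u t)) + g t‖ ≤
          2 * (2 * max ‖v‖ (‖g‖ + max 1 (Real.sqrt (volume D).toReal) * ‖k‖ * (⨆ s : ℝ, |f s|))) +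
            (‖g‖ + max 1 (Real.sqrt (volume D).toReal) * ‖k‖ * (⨆ s : ℝ, |f s|))) ∧
      (∀ u₂ : C(Set.Icc (0:ℝ) T, Lp ℝ 2 (volume.restrict D)),
        (u₂ (Set.projIcc 0 T hT.le 0) = v ∧
          ∀ t ∈ Set.Icc (0:ℝ) T,
            HasDerivWithinAt (fun s : ℝ => u₂ (Set.projIcc 0 T hT.le s))
              (-(u₂ (Set.projIcc 0 T hT.le t)) + Hk (F (u₂ (Set.projIcc 0 T hT.le t))) +
                g (Set.projIcc 0 T hT.le t))
              (Set.Icc (0:ℝ) T) t) → u₂ = u) := by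
  have : IsFiniteMeasure (volume.restrict D) := isFiniteMeasure_restrict.2 hfin.ne
  obtain ⟨Cf, hCf⟩ := hfb'
  have hFL : LipschitzWith Cf.toNNReal F :=
    Lp.lipschitzWith_of_ae_eq_comp_s11
      (lipschitzWith_of_abs_deriv_le (hf.differentiable one_ne_zero) hCf) hF
  have hfS : ∀ s, |f s| ≤ ⨆ s, |f s| := le_ciSup (hfb.imp fun C hC ↦ forall_mem_range.2 hC)
  set κ := ‖g‖ + max 1 √(volume D).toReal * ‖k‖ * ⨆ s, |f s|
  have hκ : ∀ a t, ‖Hk (F a) + g t‖ ≤ κ := fun a t ↦ by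
    have hHkF := Lp.norm_le_of_ae_eq_integral_kernel_comp k hHk hfS hF a
    rw [Measure.restrict_apply_univ] at hHkF
    have := mul_nonneg (norm_nonneg k) ((abs_nonneg _).trans (hfS 0))
    refine (norm_add_le _ _).trans ?_
    nlinarith [g.norm_coe_le_norm t, le_max_right 1 √(volume D).toReal]
  let G : ℝ → Lp ℝ 2 (volume.restrict D) → Lp ℝ 2 (volume.restrict D) :=
    fun t x ↦ -x + Hk (F x) + g (projIcc 0 T hT.le t)
  have hG : Continuous (uncurry G) := by
    have := hFL.continuous
    fun_prop
  have hGL : ∀ t, LipschitzWith (1 + ‖Hk‖₊ * Cf.toNNReal + 0) (G t) := fun t ↦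
    (LipschitzWith.id.neg.add (Hk.lipschitz.comp hFL)).add (.const _)
  obtain ⟨u, hu⟩ := exists_isSolutionOnIcc hT.le hG hGL v
  have hbound : ∀ t, ‖u t‖ ≤ max ‖v‖ κ :=
    hu.norm_le_max (A := fun t x ↦ Hk (F x) + g (projIcc 0 T hT.le t))
      (fun _ _ ↦ add_assoc _ _ _) fun _ _ ↦ hκ _ _
  have hM : 0 ≤ max ‖v‖ κ := (norm_nonneg v).trans (le_max_left _ _)
  refine ⟨u, hu, fun t ↦ by linarith [hbound t], fun s t ↦ ?_,
    fun u₂ hu₂ ↦ IsSolutionOnIcc.unique hGL hu₂ hu⟩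
  have hderiv : ‖-(u t) + Hk (F (u t)) + g t‖ ≤ ‖u t‖ + κ := by
    rw [add_assoc, ← norm_neg (u t)]
    exact (norm_add_le _ _).trans (add_le_add le_rfl (hκ _ _))
  linarith [hbound s, hbound t]

/-- Well-posedness of the nonlinear neural field on `L²(D)`: there is a
unique `u ∈ C¹(J, L²(D))` with `u(0) = v` and `u' = −u + H(k)(f∘u) + g`, and with
`κ = ‖g‖_{C⁰} + κ_D ‖k‖ ‖f‖_∞` and `M₀ = 2 max(‖v‖₂, κ)` it satisfies the time-uniform
bounds `‖u(t)‖₂ ≤ M₀` and `‖u‖_{C¹} ≤ 2M₀ + κ`. -/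
theorem stmt11 (d : ℕ) (D : Set (EuclideanSpace ℝ (Fin d)))
    (hD : IsCompact D) (hpos : 0 < volume D) (hfin : volume D < ⊤)
    (T : ℝ) (hT : 0 < T)
    (k : Lp ℝ 2 ((volume.restrict D).prod (volume.restrict D)))
    (Hk : Lp ℝ 2 (volume.restrict D) →L[ℝ] Lp ℝ 2 (volume.restrict D))
    (hHk : ∀ v : Lp ℝ 2 (volume.restrict D),
      (Hk v : _ → ℝ) =ᵐ[volume.restrict D]
        fun x => ∫ x', k (x, x') * v x' ∂(volume.restrict D))
    (f : ℝ → ℝ) (hf : ContDiff ℝ 1 f)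
    (hfb : ∃ C, ∀ s : ℝ, |f s| ≤ C) (hfb' : ∃ C, ∀ s : ℝ, |deriv f s| ≤ C)
    (F : Lp ℝ 2 (volume.restrict D) → Lp ℝ 2 (volume.restrict D))
    (hF : ∀ u : Lp ℝ 2 (volume.restrict D),
      (F u : _ → ℝ) =ᵐ[volume.restrict D] fun x => f (u x))
    (g : C(Set.Icc (0:ℝ) T, Lp ℝ 2 (volume.restrict D)))
    (v : Lp ℝ 2 (volume.restrict D)) :
    ∃ u : C(Set.Icc (0:ℝ) T, Lp ℝ 2 (volume.restrict D)),
      (u (Set.projIcc 0 T hT.le 0) = v ∧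
        ∀ t ∈ Set.Icc (0:ℝ) T,
          HasDerivWithinAt (fun s : ℝ => u (Set.projIcc 0 T hT.le s))
            (-(u (Set.projIcc 0 T hT.le t)) + Hk (F (u (Set.projIcc 0 T hT.le t))) +
              g (Set.projIcc 0 T hT.le t))
            (Set.Icc (0:ℝ) T) t) ∧
      (∀ t : Set.Icc (0:ℝ) T,
        ‖u t‖ ≤ 2 * max ‖v‖ (‖g‖ + max 1 (Real.sqrt (volume D).toReal) * ‖k‖ * (⨆ s : ℝ, |f s|))) ∧
      (∀ s t : Set.Icc (0:ℝ) T,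
        ‖u s‖ + ‖-(u t) + Hk (F (u t)) + g t‖ ≤
          2 * (2 * max ‖v‖ (‖g‖ + max 1 (Real.sqrt (volume D).toReal) * ‖k‖ * (⨆ s : ℝ, |f s|))) +
            (‖g‖ + max 1 (Real.sqrt (volume D).toReal) * ‖k‖ * (⨆ s : ℝ, |f s|))) ∧
      (∀ u₂ : C(Set.Icc (0:ℝ) T, Lp ℝ 2 (volume.restrict D)),
        (u₂ (Set.projIcc 0 T hT.le 0) = v ∧
          ∀ t ∈ Set.Icc (0:ℝ) T,
            HasDerivWithinAt (fun s : ℝ => u₂ (Set.projIcc 0 T hT.le s))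
              (-(u₂ (Set.projIcc 0 T hT.le t)) + Hk (F (u₂ (Set.projIcc 0 T hT.le t))) +
                g (Set.projIcc 0 T hT.le t))
              (Set.Icc (0:ℝ) T) t) → u₂ = u) :=
  stmt11_general d D hfin T hT k Hk hHk f hf hfb hfb' F hF g v
end

section
/- Let D ⊂ ℝ^d be a compact set with finite positive Lebesgue measure |D|, J = [0,T] with T > 0, k ∈ L²(D×D), f ∈ BC¹(ℝ), g ∈ C⁰(J, L²(D)), and v ∈ L²(D). Let (P_n)_{n∈ℕ} be a sequence of bounded linear operators on L²(D) such that P_n z → z in L²(D) for every z ∈ L²(D), and for each n let u_n ∈ C¹(J, L²(D)) satisfy u_n(0) = P_n v and u_n'(t) = P_n( −u_n(t) + H(k)(f∘u_n(t)) + g(t) ) for all t ∈ J. Then there exists a constant M̄ < ∞, independent of n, such that sup_{t∈J} ‖u_n(t)‖₂ ≤ M̄ for every n ∈ ℕ. -/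
open MeasureTheory Set Filter

/-- Uniform boundedness of spatially-projected solutions: if the
projectors `P_n` converge strongly to the identity (`P_n z → z` for every `z ∈ L²(D)`)
and `u_n` solves the projected neural field problem for each `n`, then there is a
constant `M̄`, independent of `n`, with `sup_{t∈J} ‖u_n(t)‖₂ ≤ M̄` for all `n`. -/
theorem stmt19 (d : ℕ) (D : Set (EuclideanSpace ℝ (Fin d)))
    (hD : IsCompact D) (hpos : 0 < volume D) (hfin : volume D < ⊤)
    (T : ℝ) (hT : 0 < T)
    (k : Lp ℝ 2 ((volume.restrict D).prod (volume.restrict D)))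
    (Hk : Lp ℝ 2 (volume.restrict D) →L[ℝ] Lp ℝ 2 (volume.restrict D))
    (hHk : ∀ v : Lp ℝ 2 (volume.restrict D),
      (Hk v : _ → ℝ) =ᵐ[volume.restrict D]
        fun x => ∫ x', k (x, x') * v x' ∂(volume.restrict D))
    (f : ℝ → ℝ) (hf : ContDiff ℝ 1 f)
    (hfb : ∃ C, ∀ s : ℝ, |f s| ≤ C) (hfb' : ∃ C, ∀ s : ℝ, |deriv f s| ≤ C)
    (F : Lp ℝ 2 (volume.restrict D) → Lp ℝ 2 (volume.restrict D))
    (hF : ∀ u : Lp ℝ 2 (volume.restrict D),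
      (F u : _ → ℝ) =ᵐ[volume.restrict D] fun x => f (u x))
    (g : C(Set.Icc (0:ℝ) T, Lp ℝ 2 (volume.restrict D)))
    (v : Lp ℝ 2 (volume.restrict D))
    (P : ℕ → (Lp ℝ 2 (volume.restrict D) →L[ℝ] Lp ℝ 2 (volume.restrict D)))
    (hP : ∀ z : Lp ℝ 2 (volume.restrict D), Tendsto (fun n => P n z) atTop (nhds z))
    (u : ℕ → ℝ → Lp ℝ 2 (volume.restrict D))
    (hu0 : ∀ n, u n 0 = P n v)
    (hucont : ∀ n, ContinuousOn (u n) (Set.Icc (0:ℝ) T))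
    (huderiv : ∀ n, ∀ t ∈ Set.Icc (0:ℝ) T,
      HasDerivWithinAt (u n)
        (P n (-(u n t) + Hk (F (u n t)) + g (Set.projIcc 0 T hT.le t)))
        (Set.Icc (0:ℝ) T) t) :
    ∃ M : ℝ, ∀ n, ∀ t ∈ Set.Icc (0:ℝ) T, ‖u n t‖ ≤ M := by
  haveI : IsFiniteMeasure (volume.restrict D) :=
    ⟨by rwa [Measure.restrict_apply_univ]⟩
  -- Banach–Steinhaus: uniform bound on the projectors
  obtain ⟨CP, hCP⟩ : ∃ C, ∀ n, ‖P n‖ ≤ C := by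
    apply banach_steinhaus
    intro z
    obtain ⟨C, hC⟩ := ((hP z).norm.bddAbove_range)
    exact ⟨C, fun n => hC ⟨n, rfl⟩⟩
  have hCP0 : 0 ≤ CP := le_trans (norm_nonneg _) (hCP 0)
  -- bound for `F`
  obtain ⟨Cf, hCf⟩ := hfb
  have hCf0 : 0 ≤ Cf := le_trans (abs_nonneg _) (hCf 0)
  set CF : ℝ := (measureUnivNNReal (volume.restrict D) : ℝ) ^ (ENNReal.toReal 2)⁻¹ * Cf with hCFdef
  have hFbound : ∀ w, ‖F w‖ ≤ CF := by
    intro w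
    apply Lp.norm_le_of_ae_bound hCf0
    filter_upwards [hF w] with x hx
    rw [hx]
    exact hCf _
  have hCF0 : 0 ≤ CF := le_trans (norm_nonneg _) (hFbound v)
  -- bound for `g`
  have hgbound : ∀ s, ‖g s‖ ≤ ‖g‖ := fun s => g.norm_coe_le_norm s
  -- constants for Grönwall
  set K : ℝ := CP + 1 with hK
  have hK0 : (0:ℝ) < K := by positivity
  set ε : ℝ := CP * (‖Hk‖ * CF + ‖g‖) with hε
  have hε0 : 0 ≤ ε := by positivity
  set δ : ℝ := CP * ‖v‖ with hδ
  have hδ0 : 0 ≤ δ := by positivity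
  refine ⟨δ * Real.exp (K * T) + ε / K * (Real.exp (K * T) - 1), fun n t ht => ?_⟩
  have key : ∀ x ∈ Icc (0:ℝ) T, ‖u n x‖ ≤ gronwallBound δ K ε (x - 0) := by
    apply norm_le_gronwallBound_of_norm_deriv_right_le (hucont n)
    · intro x hx
      exact (huderiv n x ⟨hx.1, hx.2.le⟩).mono_of_mem_nhdsWithin
        (Icc_mem_nhdsGE_of_mem ⟨hx.1, hx.2⟩)
    · rw [hu0 n]
      calc ‖P n v‖ ≤ ‖P n‖ * ‖v‖ := (P n).le_opNorm v
        _ ≤ CP * ‖v‖ := by gcongr; exact hCP n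
    · intro x hx
      calc ‖P n (-(u n x) + Hk (F (u n x)) + g (projIcc 0 T hT.le x))‖
          ≤ ‖P n‖ * ‖-(u n x) + Hk (F (u n x)) + g (projIcc 0 T hT.le x)‖ :=
            (P n).le_opNorm _
        _ ≤ CP * (‖u n x‖ + (‖Hk‖ * CF + ‖g‖)) := by
            apply mul_le_mul (hCP n) _ (norm_nonneg _) hCP0
            calc ‖-(u n x) + Hk (F (u n x)) + g (projIcc 0 T hT.le x)‖
                ≤ ‖-(u n x) + Hk (F (u n x))‖ + ‖g (projIcc 0 T hT.le x)‖ := norm_add_le _ _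
              _ ≤ (‖-(u n x)‖ + ‖Hk (F (u n x))‖) + ‖g‖ :=
                  add_le_add (norm_add_le _ _) (hgbound _)
              _ ≤ (‖u n x‖ + ‖Hk‖ * CF) + ‖g‖ := by
                  rw [norm_neg]
                  gcongr
                  calc ‖Hk (F (u n x))‖ ≤ ‖Hk‖ * ‖F (u n x)‖ := Hk.le_opNorm _
                    _ ≤ ‖Hk‖ * CF := by gcongr; exact hFbound _
              _ = ‖u n x‖ + (‖Hk‖ * CF + ‖g‖) := by ring
        _ = CP * ‖u n x‖ + ε := by rw [hε]; ring
        _ ≤ K * ‖u n x‖ + ε := by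
            have : CP ≤ K := by rw [hK]; linarith
            nlinarith [norm_nonneg (u n x)]
  have := key t ht
  rw [gronwallBound_of_K_ne_0 hK0.ne'] at this
  refine this.trans ?_
  have hx : t - 0 ≤ T := by linarith [ht.2]
  have h1 : Real.exp (K * (t - 0)) ≤ Real.exp (K * T) := by
    apply Real.exp_le_exp.2
    nlinarith
  have h2 : (0:ℝ) ≤ ε / K := div_nonneg hε0 hK0.le
  nlinarith [Real.exp_pos (K * (t - 0)), Real.exp_pos (K * T),
    mul_le_mul_of_nonneg_left h1 hδ0, mul_le_mul_of_nonneg_left h1 h2]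
end
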